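/- For every μ > 0 and every p ≥ 1, the function mapping a real 3×3 matrix F to (μ/p)·(σ₁(F)^p + σ₂(F)^p + σ₃(F)^p) is convex on the space of real 3×3 matrices. -/

import Mathlib

/-- The decreasingly ordered singular values of a real 3×3 matrix:
`singularValues F 0 ≥ singularValues F 1 ≥ singularValues F 2` are the square roots of the
eigenvalues of the symmetric positive semidefinite matrix `Fᵀ F`. -/
noncomputable def singularValues (F : Matrix (Fin 3) (Fin 3) ℝ) : Fin 3 → ℝ := fun k =>
  Real.sqrt
    (((Matrix.isHermitian_conjTranspose_mul_self F : (Matrix.transpose F * F).IsHermitian).eigenvalues ∘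
      Tuple.sort (Matrix.isHermitian_conjTranspose_mul_self F : (Matrix.transpose F * F).IsHermitian).eigenvalues) k.rev)

open Matrix BigOperators

namespace OgdenAux

variable (F : Matrix (Fin 3) (Fin 3) ℝ)

/-- right singular vectors (sorted decreasingly by singular value) -/
noncomputable def rv (k : Fin 3) : Fin 3 → ℝ :=
  ((Matrix.isHermitian_conjTranspose_mul_self F : (Matrix.transpose F * F).IsHermitian).eigenvectorBasis
    (Tuple.sort (Matrix.isHermitian_conjTranspose_mul_self F : (Matrix.transpose F * F).IsHermitian).eigenvalues k.rev))

lemma sv_nonneg (k : Fin 3) : 0 ≤ singularValues F k := Real.sqrt_nonneg _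

lemma sv_antitone : Antitone (singularValues F) := by
  intro k l h
  exact Real.sqrt_le_sqrt (Tuple.monotone_sort _ (Fin.rev_le_rev.mpr h))

lemma mulVec_rv (k : Fin 3) :
    (Fᵀ * F) *ᵥ rv F k = (singularValues F k ^ (2:ℕ)) • rv F k := by
  have h1 := (Matrix.isHermitian_conjTranspose_mul_self F : (Matrix.transpose F * F).IsHermitian).mulVec_eigenvectorBasis
    (Tuple.sort (Matrix.isHermitian_conjTranspose_mul_self F : (Matrix.transpose F * F).IsHermitian).eigenvalues k.rev)
  have h2 : singularValues F k ^ (2:ℕ)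
      = (Matrix.isHermitian_conjTranspose_mul_self F : (Matrix.transpose F * F).IsHermitian).eigenvalues
        (Tuple.sort (Matrix.isHermitian_conjTranspose_mul_self F : (Matrix.transpose F * F).IsHermitian).eigenvalues k.rev) :=
    Real.sq_sqrt (Matrix.eigenvalues_conjTranspose_mul_self_nonneg F _)
  rw [show Fᵀ = Fᴴ from (Matrix.conjTranspose_eq_transpose_of_trivial F).symm, h2]
  exact h1

lemma rv_ortho (i j : Fin 3) : rv F i ⬝ᵥ rv F j = if i = j then 1 else 0 := by
  have h := (Matrix.isHermitian_conjTranspose_mul_self F : (Matrix.transpose F * F).IsHermitian).eigenvectorBasis.orthonormal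
  rw [orthonormal_iff_ite] at h
  have h2 := h (Tuple.sort (Matrix.isHermitian_conjTranspose_mul_self F : (Matrix.transpose F * F).IsHermitian).eigenvalues i.rev)
    (Tuple.sort (Matrix.isHermitian_conjTranspose_mul_self F : (Matrix.transpose F * F).IsHermitian).eigenvalues j.rev)
  rw [PiLp.inner_apply] at h2
  simp only [RCLike.inner_apply, conj_trivial] at h2
  have hinj : (Tuple.sort (Matrix.isHermitian_conjTranspose_mul_self F : (Matrix.transpose F * F).IsHermitian).eigenvalues i.rev
      = Tuple.sort (Matrix.isHermitian_conjTranspose_mul_self F : (Matrix.transpose F * F).IsHermitian).eigenvalues j.rev) ↔ i = j := by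
    rw [(Equiv.injective _).eq_iff, Fin.rev_inj]
  rw [dotProduct]
  unfold rv
  simp only [mul_comm] at h2 ⊢
  rw [h2]
  simp [hinj]

lemma dot_F_rv (i j : Fin 3) :
    (F *ᵥ rv F i) ⬝ᵥ (F *ᵥ rv F j)
      = if i = j then singularValues F j ^ (2:ℕ) else 0 := by
  rw [Matrix.dotProduct_mulVec, ← Matrix.mulVec_transpose, Matrix.mulVec_mulVec,
    mulVec_rv, smul_dotProduct, rv_ortho]
  by_cases h : i = j <;> simp [h]

/-- left singular vectors (not normalized when σ = 0) -/
noncomputable def lv (k : Fin 3) : Fin 3 → ℝ :=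
  (singularValues F k)⁻¹ • (F *ᵥ rv F k)

lemma F_mulVec_rv (k : Fin 3) :
    F *ᵥ rv F k = singularValues F k • lv F k := by
  by_cases h : singularValues F k = 0
  · have h0 : (F *ᵥ rv F k) ⬝ᵥ (F *ᵥ rv F k) = 0 := by
      rw [dot_F_rv]; simp [h]
    have hz : F *ᵥ rv F k = 0 := by
      funext i
      have hnn : ∀ j, 0 ≤ (F *ᵥ rv F k) j * (F *ᵥ rv F k) j := fun j => mul_self_nonneg _
      have := (Finset.sum_eq_zero_iff_of_nonneg (fun j _ => hnn j)).mp h0 i (Finset.mem_univ i)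
      have := mul_self_eq_zero.mp this
      simpa using this
    simp [lv, hz]
  · rw [lv, smul_smul, mul_inv_cancel₀ h, one_smul]

lemma lv_dot (i j : Fin 3) :
    lv F i ⬝ᵥ lv F j = if i = j ∧ singularValues F i ≠ 0 then 1 else 0 := by
  rw [lv, lv, smul_dotProduct, dotProduct_smul, dot_F_rv]
  by_cases h : i = j
  · subst h
    by_cases h0 : singularValues F i = 0
    · simp [h0]
    · simp only [if_pos rfl, smul_eq_mul, pow_two, ne_eq, h0, not_false_iff, and_true,
        if_pos]
      field_simp
  · simp [h]

lemma lv_dot_self_le (k : Fin 3) : lv F k ⬝ᵥ lv F k ≤ 1 := by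
  rw [lv_dot]; split <;> norm_num

lemma lv_dot_self_nonneg (k : Fin 3) : 0 ≤ lv F k ⬝ᵥ lv F k := by
  rw [lv_dot]; split <;> norm_num

/-- expansion of any vector in the right singular basis -/
lemma rv_expansion (w : Fin 3 → ℝ) : ∑ j, (rv F j ⬝ᵥ w) • rv F j = w := by
  have hVtV : (Matrix.of fun i j => rv F j i)ᵀ * (Matrix.of fun i j => rv F j i) = 1 := by
    ext i j
    simpa [Matrix.mul_apply, Matrix.one_apply, dotProduct] using rv_ortho F i j
  have hVVt := mul_eq_one_comm.mp hVtV
  funext i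
  have h := congrFun (congrArg (fun M => M *ᵥ w) hVVt) i
  simp only [Matrix.one_mulVec] at h
  rw [← h]
  simp only [Matrix.mulVec, Matrix.mul_apply, dotProduct, Finset.sum_apply, Pi.smul_apply,
    Matrix.transpose_apply, Matrix.of_apply, smul_eq_mul, Finset.sum_mul, Finset.mul_sum]
  rw [Finset.sum_comm]
  exact Finset.sum_congr rfl fun j _ => Finset.sum_congr rfl fun k _ => by ring

lemma F_decomp (w : Fin 3 → ℝ) :
    F *ᵥ w = ∑ j, (rv F j ⬝ᵥ w) • (singularValues F j • lv F j) := by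
  conv_lhs => rw [← rv_expansion F w, ← Matrix.mulVecLin_apply, map_sum]
  exact Finset.sum_congr rfl fun j _ => by
    rw [_root_.map_smul, Matrix.mulVecLin_apply, F_mulVec_rv]

lemma bessel3 (w a b c : Fin 3 → ℝ) (hab : a ⬝ᵥ b = 0) (hac : a ⬝ᵥ c = 0) (hbc : b ⬝ᵥ c = 0)
    (ha : a ⬝ᵥ a ≤ 1) (hb : b ⬝ᵥ b ≤ 1) (hc : c ⬝ᵥ c ≤ 1) :
    (w ⬝ᵥ a)^2 + (w ⬝ᵥ b)^2 + (w ⬝ᵥ c)^2 ≤ w ⬝ᵥ w := by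
  have key : 0 ≤ (w - (w⬝ᵥa)•a - (w⬝ᵥb)•b - (w⬝ᵥc)•c) ⬝ᵥ (w - (w⬝ᵥa)•a - (w⬝ᵥb)•b - (w⬝ᵥc)•c) := by
    rw [dotProduct]
    exact Finset.sum_nonneg fun i _ => mul_self_nonneg _
  simp only [sub_dotProduct, dotProduct_sub, smul_dotProduct,
    dotProduct_smul, smul_eq_mul] at key
  rw [dotProduct_comm a w, dotProduct_comm b w, dotProduct_comm c w,
    dotProduct_comm b a, dotProduct_comm c a, dotProduct_comm c b,
    hab, hac, hbc] at key
  nlinarith [sq_nonneg (w⬝ᵥa), sq_nonneg (w⬝ᵥb), sq_nonneg (w⬝ᵥc)]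

lemma lv_dot_ne {i j : Fin 3} (h : i ≠ j) : lv F i ⬝ᵥ lv F j = 0 := by
  rw [lv_dot]; simp [h]

lemma rv_dot_ne {i j : Fin 3} (h : i ≠ j) : rv F i ⬝ᵥ rv F j = 0 := by
  rw [rv_ortho]; simp [h]

lemma rv_dot_self (i : Fin 3) : rv F i ⬝ᵥ rv F i = 1 := by
  rw [rv_ortho]; simp

lemma step1 (M : Matrix (Fin 3) (Fin 3) ℝ) (v w : Fin 3 → ℝ) :
    v ⬝ᵥ (M *ᵥ w) = ∑ j, singularValues M j * ((v ⬝ᵥ lv M j) * (rv M j ⬝ᵥ w)) := by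
  rw [F_decomp M w, Fin.sum_univ_three, dotProduct_add, dotProduct_add,
    Fin.sum_univ_three]
  simp only [dotProduct_smul, smul_eq_mul]
  ring

lemma abel3 {s0 s1 s2 u0 u1 u2 B0 B1 B2 : ℝ} (h01 : s1 ≤ s0) (h12 : s2 ≤ s1) (h2 : 0 ≤ s2)
    (hb0 : u0 ≤ B0) (hb1 : u0 + u1 ≤ B1) (hb2 : u0 + u1 + u2 ≤ B2) :
    s0*u0 + s1*u1 + s2*u2 ≤ (s0-s1)*B0 + (s1-s2)*B1 + s2*B2 := by
  nlinarith [mul_le_mul_of_nonneg_left hb0 (sub_nonneg.2 h01),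
    mul_le_mul_of_nonneg_left hb1 (sub_nonneg.2 h12),
    mul_le_mul_of_nonneg_left hb2 h2]

lemma key_bound (M : Matrix (Fin 3) (Fin 3) ℝ) (x y : Fin 3 → Fin 3 → ℝ) (m : Fin 3)
    (hxo : ∀ i j, i ≠ j → x i ⬝ᵥ x j = 0) (hxn : ∀ i, x i ⬝ᵥ x i ≤ 1)
    (hyo : ∀ i j, i ≠ j → y i ⬝ᵥ y j = 0) (hyn : ∀ i, y i ⬝ᵥ y i ≤ 1)
    (hsupp : ∀ i, m < i → x i = 0) :
    ∑ i, x i ⬝ᵥ (M *ᵥ y i) ≤ ∑ j, (if j ≤ m then singularValues M j else 0) := by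
  set s := singularValues M with hs
  set p : Fin 3 → Fin 3 → ℝ := fun i j => x i ⬝ᵥ lv M j with hp
  set q : Fin 3 → Fin 3 → ℝ := fun i j => rv M j ⬝ᵥ y i with hq
  have hs01 : s 1 ≤ s 0 := sv_antitone M (by decide)
  have hs12 : s 2 ≤ s 1 := sv_antitone M (by decide)
  have hs2 : 0 ≤ s 2 := sv_nonneg M 2
  -- row Bessel inequalities (sum over j)
  have rowP : ∀ i, p i 0 ^ 2 + p i 1 ^ 2 + p i 2 ^ 2 ≤ 1 := by
    intro i
    have := bessel3 (x i) (lv M 0) (lv M 1) (lv M 2)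
      (lv_dot_ne M (by decide)) (lv_dot_ne M (by decide)) (lv_dot_ne M (by decide))
      (lv_dot_self_le M 0) (lv_dot_self_le M 1) (lv_dot_self_le M 2)
    exact this.trans (hxn i)
  have rowQ : ∀ i, q i 0 ^ 2 + q i 1 ^ 2 + q i 2 ^ 2 ≤ 1 := by
    intro i
    have := bessel3 (y i) (rv M 0) (rv M 1) (rv M 2)
      (rv_dot_ne M (by decide)) (rv_dot_ne M (by decide)) (rv_dot_ne M (by decide))
      (le_of_eq (rv_dot_self M 0)) (le_of_eq (rv_dot_self M 1)) (le_of_eq (rv_dot_self M 2))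
    have e : ∀ j, y i ⬝ᵥ rv M j = q i j := fun j => dotProduct_comm _ _
    rw [e 0, e 1, e 2] at this
    exact this.trans (hyn i)
  -- column Bessel inequalities (sum over i)
  have colP : ∀ j, p 0 j ^ 2 + p 1 j ^ 2 + p 2 j ^ 2 ≤ 1 := by
    intro j
    have := bessel3 (lv M j) (x 0) (x 1) (x 2)
      (hxo 0 1 (by decide)) (hxo 0 2 (by decide)) (hxo 1 2 (by decide))
      (hxn 0) (hxn 1) (hxn 2)
    have e : ∀ i, lv M j ⬝ᵥ x i = p i j := fun i => dotProduct_comm _ _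
    rw [e 0, e 1, e 2] at this
    exact this.trans (lv_dot_self_le M j)
  have colQ : ∀ j, q 0 j ^ 2 + q 1 j ^ 2 + q 2 j ^ 2 ≤ 1 := by
    intro j
    have := bessel3 (rv M j) (y 0) (y 1) (y 2)
      (hyo 0 1 (by decide)) (hyo 0 2 (by decide)) (hyo 1 2 (by decide))
      (hyn 0) (hyn 1) (hyn 2)
    exact this.trans (le_of_eq (rv_dot_self M j))
  -- column sums of p*q are at most 1
  have hcol : ∀ j, p 0 j * q 0 j + p 1 j * q 1 j + p 2 j * q 2 j ≤ 1 := by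
    intro j
    nlinarith [colP j, colQ j, sq_nonneg (p 0 j - q 0 j), sq_nonneg (p 1 j - q 1 j),
      sq_nonneg (p 2 j - q 2 j)]
  -- prefix row sums of p*q are at most 1
  have hrow0 : ∀ i, p i 0 * q i 0 ≤ 1 := by
    intro i
    nlinarith [rowP i, rowQ i, sq_nonneg (p i 0 - q i 0), sq_nonneg (p i 1), sq_nonneg (p i 2),
      sq_nonneg (q i 1), sq_nonneg (q i 2)]
  have hrow01 : ∀ i, p i 0 * q i 0 + p i 1 * q i 1 ≤ 1 := by
    intro i
    nlinarith [rowP i, rowQ i, sq_nonneg (p i 0 - q i 0), sq_nonneg (p i 1 - q i 1),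
      sq_nonneg (p i 2), sq_nonneg (q i 2)]
  have hrow : ∀ i, p i 0 * q i 0 + p i 1 * q i 1 + p i 2 * q i 2 ≤ 1 := by
    intro i
    nlinarith [rowP i, rowQ i, sq_nonneg (p i 0 - q i 0), sq_nonneg (p i 1 - q i 1),
      sq_nonneg (p i 2 - q i 2)]
  have hstep : ∀ i, x i ⬝ᵥ (M *ᵥ y i)
      = s 0 * (p i 0 * q i 0) + s 1 * (p i 1 * q i 1) + s 2 * (p i 2 * q i 2) := by
    intro i
    rw [step1 M (x i) (y i), Fin.sum_univ_three]
  rw [Fin.sum_univ_three, Fin.sum_univ_three, hstep 0, hstep 1, hstep 2]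
  have hz : ∀ i j, m < i → p i j = 0 := by
    intro i j hi
    simp [hp, hsupp i hi, zero_dotProduct]
  fin_cases m
  · have h1 : ∀ j, p 1 j = 0 := fun j => hz 1 j (by decide)
    have h2 : ∀ j, p 2 j = 0 := fun j => hz 2 j (by decide)
    have habel := abel3 (u0 := p 0 0 * q 0 0) (u1 := p 0 1 * q 0 1) (u2 := p 0 2 * q 0 2)
      (B0 := 1) (B1 := 1) (B2 := 1) hs01 hs12 hs2 (hrow0 0) (hrow01 0) (hrow 0)
    simp only [h1, h2, zero_mul, mul_zero, add_zero, zero_add, Fin.zero_eta, Fin.mk_one,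
      Fin.reduceFinMk, Fin.reduceLE, reduceIte, le_refl, if_true, if_false]
    linarith
  · have h2 : ∀ j, p 2 j = 0 := fun j => hz 2 j (by decide)
    have hcol' : ∀ j, p 0 j * q 0 j + p 1 j * q 1 j ≤ 1 := fun j => by
      have := hcol j
      simp only [h2, zero_mul, add_zero] at this
      exact this
    have hb0 := hcol' 0
    have hb1 : (p 0 0 * q 0 0 + p 1 0 * q 1 0) + (p 0 1 * q 0 1 + p 1 1 * q 1 1) ≤ 2 := by
      have := hcol' 0; have := hcol' 1; linarith
    have hb2 : (p 0 0 * q 0 0 + p 1 0 * q 1 0) + (p 0 1 * q 0 1 + p 1 1 * q 1 1)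
        + (p 0 2 * q 0 2 + p 1 2 * q 1 2) ≤ 2 := by
      have := hrow 0; have := hrow 1; linarith
    have habel := abel3 (B0 := 1) (B1 := 2) (B2 := 2) hs01 hs12 hs2 hb0 hb1 hb2
    simp only [h2, zero_mul, mul_zero, add_zero, Fin.zero_eta, Fin.mk_one,
      Fin.reduceFinMk, Fin.reduceLE, reduceIte, le_refl, if_true, if_false]
    linarith
  · have hb0 : p 0 0 * q 0 0 + p 1 0 * q 1 0 + p 2 0 * q 2 0 ≤ 1 := hcol 0
    have hb1 : (p 0 0 * q 0 0 + p 1 0 * q 1 0 + p 2 0 * q 2 0)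
        + (p 0 1 * q 0 1 + p 1 1 * q 1 1 + p 2 1 * q 2 1) ≤ 2 := by
      have := hcol 0; have := hcol 1; linarith
    have hb2 : (p 0 0 * q 0 0 + p 1 0 * q 1 0 + p 2 0 * q 2 0)
        + (p 0 1 * q 0 1 + p 1 1 * q 1 1 + p 2 1 * q 2 1)
        + (p 0 2 * q 0 2 + p 1 2 * q 1 2 + p 2 2 * q 2 2) ≤ 3 := by
      have := hcol 0; have := hcol 1; have := hcol 2; linarith
    have habel := abel3 (B0 := 1) (B1 := 2) (B2 := 3) hs01 hs12 hs2 hb0 hb1 hb2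
    simp only [Fin.zero_eta, Fin.mk_one, Fin.reduceFinMk, Fin.reduceLE, reduceIte, le_refl,
      if_true, if_false]
    linarith

lemma lv_dot_F_rv (k : Fin 3) : lv F k ⬝ᵥ (F *ᵥ rv F k) = singularValues F k := by
  rw [F_mulVec_rv, dotProduct_smul, lv_dot]
  by_cases h : singularValues F k = 0 <;> simp [h]

lemma majorize (F G : Matrix (Fin 3) (Fin 3) ℝ) (a b : ℝ) (ha : 0 ≤ a) (hb : 0 ≤ b)
    (m : Fin 3) :
    ∑ j, (if j ≤ m then singularValues (a • F + b • G) j else 0)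
      ≤ a * ∑ j, (if j ≤ m then singularValues F j else 0)
        + b * ∑ j, (if j ≤ m then singularValues G j else 0) := by
  set C := a • F + b • G with hC
  set x : Fin 3 → Fin 3 → ℝ := fun i => if i ≤ m then lv C i else 0 with hx
  set y : Fin 3 → Fin 3 → ℝ := fun i => if i ≤ m then rv C i else 0 with hy
  have hxo : ∀ i j, i ≠ j → x i ⬝ᵥ x j = 0 := by
    intro i j hij
    by_cases h1 : i ≤ m <;> by_cases h2 : j ≤ m <;>
      simp [hx, h1, h2, lv_dot_ne C hij, zero_dotProduct, dotProduct_zero]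
  have hxn : ∀ i, x i ⬝ᵥ x i ≤ 1 := by
    intro i
    by_cases h1 : i ≤ m
    · have h : x i = lv C i := by simp [hx, h1]
      rw [h]; exact lv_dot_self_le C i
    · have h : x i = 0 := by simp [hx, h1]
      rw [h, zero_dotProduct]; norm_num
  have hyo : ∀ i j, i ≠ j → y i ⬝ᵥ y j = 0 := by
    intro i j hij
    by_cases h1 : i ≤ m <;> by_cases h2 : j ≤ m <;>
      simp [hy, h1, h2, rv_dot_ne C hij, zero_dotProduct, dotProduct_zero]
  have hyn : ∀ i, y i ⬝ᵥ y i ≤ 1 := by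
    intro i
    by_cases h1 : i ≤ m
    · have h : y i = rv C i := by simp [hy, h1]
      rw [h, rv_dot_self]
    · have h : y i = 0 := by simp [hy, h1]
      rw [h, zero_dotProduct]; norm_num
  have hsupp : ∀ i, m < i → x i = 0 := by
    intro i hi
    simp [hx, not_le.2 hi]
  have hattain : ∑ i, x i ⬝ᵥ (C *ᵥ y i)
      = ∑ j, (if j ≤ m then singularValues C j else 0) := by
    refine Finset.sum_congr rfl fun i _ => ?_
    by_cases h1 : i ≤ m
    · simp only [hx, hy, if_pos h1]
      exact lv_dot_F_rv C i
    · simp [hx, hy, if_neg h1]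
  have hsplit : ∀ i, x i ⬝ᵥ (C *ᵥ y i)
      = a * (x i ⬝ᵥ (F *ᵥ y i)) + b * (x i ⬝ᵥ (G *ᵥ y i)) := by
    intro i
    rw [hC, Matrix.add_mulVec, Matrix.smul_mulVec, Matrix.smul_mulVec,
      dotProduct_add, dotProduct_smul, dotProduct_smul]
    simp [smul_eq_mul]
  have hF := key_bound F x y m hxo hxn hyo hyn hsupp
  have hG := key_bound G x y m hxo hxn hyo hyn hsupp
  calc ∑ j, (if j ≤ m then singularValues C j else 0)
      = ∑ i, x i ⬝ᵥ (C *ᵥ y i) := hattain.symm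
    _ = a * (∑ i, x i ⬝ᵥ (F *ᵥ y i)) + b * (∑ i, x i ⬝ᵥ (G *ᵥ y i)) := by
        rw [Fin.sum_univ_three, Fin.sum_univ_three, Fin.sum_univ_three,
          hsplit 0, hsplit 1, hsplit 2]; ring
    _ ≤ a * ∑ j, (if j ≤ m then singularValues F j else 0)
        + b * ∑ j, (if j ≤ m then singularValues G j else 0) := by
        have h1 := mul_le_mul_of_nonneg_left hF ha
        have h2 := mul_le_mul_of_nonneg_left hG hb
        linarith

lemma rpow_grad {P : ℝ} (hP : 1 ≤ P) {u v : ℝ} (hu : 0 ≤ u) (hv : 0 ≤ v) :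
    v ^ P + P * v ^ (P - 1) * (u - v) ≤ u ^ P := by
  rcases eq_or_lt_of_le hv with hv0 | hv'
  · rw [← hv0]
    rcases eq_or_lt_of_le hP with hP1 | hP1
    · rw [← hP1]
      simp [Real.rpow_one, Real.zero_rpow one_ne_zero]
    · rw [Real.zero_rpow (by positivity), Real.zero_rpow (by linarith : P - 1 ≠ 0)]
      simp only [mul_zero, zero_mul, add_zero, zero_add]
      positivity
  · have hvne : v ≠ 0 := ne_of_gt hv'
    have hs : -1 ≤ u / v - 1 := by
      have : 0 ≤ u / v := div_nonneg hu hv'.le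
      linarith
    have hber := one_add_mul_self_le_rpow_one_add hs hP
    have h1 : (1 + (u / v - 1)) = u / v := by ring
    rw [h1, Real.div_rpow hu hv'.le] at hber
    have hvP : (0:ℝ) < v ^ P := Real.rpow_pos_of_pos hv' P
    have h3 := mul_le_mul_of_nonneg_left hber hvP.le
    have h4 : v ^ P * (u ^ P / v ^ P) = u ^ P := by field_simp
    rw [h4] at h3
    have h5 : v ^ (P - 1) = v ^ P / v := Real.rpow_sub_one hvne P
    calc v ^ P + P * v ^ (P - 1) * (u - v)
        = v ^ P * (1 + P * (u / v - 1)) := by rw [h5]; field_simp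
      _ ≤ u ^ P := h3

lemma hlp {P : ℝ} (hP : 1 ≤ P) {x0 x1 x2 y0 y1 y2 : ℝ}
    (hx2 : 0 ≤ x2) (hx12 : x2 ≤ x1) (hx01 : x1 ≤ x0)
    (hy2 : 0 ≤ y2) (hy12 : y2 ≤ y1) (hy01 : y1 ≤ y0)
    (h0 : x0 ≤ y0) (h01 : x0 + x1 ≤ y0 + y1) (h012 : x0 + x1 + x2 ≤ y0 + y1 + y2) :
    x0 ^ P + x1 ^ P + x2 ^ P ≤ y0 ^ P + y1 ^ P + y2 ^ P := by
  have hx1 : 0 ≤ x1 := hx2.trans hx12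
  have hx0 : 0 ≤ x0 := hx1.trans hx01
  have hy1 : 0 ≤ y1 := hy2.trans hy12
  have hy0 : 0 ≤ y0 := hy1.trans hy01
  have hPpos : (0:ℝ) < P := lt_of_lt_of_le one_pos hP
  set g0 := P * x0 ^ (P - 1) with hg0
  set g1 := P * x1 ^ (P - 1) with hg1
  set g2 := P * x2 ^ (P - 1) with hg2def
  have hg2 : 0 ≤ g2 := mul_nonneg hPpos.le (Real.rpow_nonneg hx2 _)
  have hg12 : g2 ≤ g1 :=
    mul_le_mul_of_nonneg_left (Real.rpow_le_rpow hx2 hx12 (by linarith)) hPpos.le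
  have hg01 : g1 ≤ g0 :=
    mul_le_mul_of_nonneg_left (Real.rpow_le_rpow hx1 hx01 (by linarith)) hPpos.le
  have grad0 := rpow_grad hP hy0 hx0
  have grad1 := rpow_grad hP hy1 hx1
  have grad2 := rpow_grad hP hy2 hx2
  nlinarith [mul_nonneg (sub_nonneg.2 hg01) (sub_nonneg.2 h0),
    mul_nonneg (sub_nonneg.2 hg12) (by linarith : (0:ℝ) ≤ y0 + y1 - (x0 + x1)),
    mul_nonneg hg2 (by linarith : (0:ℝ) ≤ y0 + y1 + y2 - (x0 + x1 + x2))]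

lemma ite_sum0 (f : Fin 3 → ℝ) : (∑ j, if j ≤ (0 : Fin 3) then f j else 0) = f 0 := by
  rw [Fin.sum_univ_three]
  norm_num [show ¬((1:Fin 3) ≤ 0) by decide, show ¬((2:Fin 3) ≤ 0) by decide]

lemma ite_sum1 (f : Fin 3 → ℝ) : (∑ j, if j ≤ (1 : Fin 3) then f j else 0) = f 0 + f 1 := by
  rw [Fin.sum_univ_three]
  norm_num [show ((0:Fin 3) ≤ 1) by decide, show ((1:Fin 3) ≤ 1) by decide,
    show ¬((2:Fin 3) ≤ 1) by decide]

lemma ite_sum2 (f : Fin 3 → ℝ) :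
    (∑ j, if j ≤ (2 : Fin 3) then f j else 0) = f 0 + f 1 + f 2 := by
  rw [Fin.sum_univ_three]
  norm_num [show ((0:Fin 3) ≤ 2) by decide, show ((1:Fin 3) ≤ 2) by decide,
    show ((2:Fin 3) ≤ 2) by decide]

end OgdenAux

/-- **Polyconvexity of the one-term Ogden energy.** For every `μ > 0` and `p ≥ 1`, the map
`F ↦ (μ/p) (σ₁(F)^p + σ₂(F)^p + σ₃(F)^p)` is convex on real 3×3 matrices. -/
theorem ogden_term_convex (μ p : ℝ) (hμ : 0 < μ) (hp : 1 ≤ p) :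
    ConvexOn ℝ Set.univ
      (fun F : Matrix (Fin 3) (Fin 3) ℝ => μ / p * ∑ k, singularValues F k ^ p) := by
  refine ⟨convex_univ, ?_⟩
  intro F _ G _ a b ha hb hab
  simp only [smul_eq_mul]
  have hμp : 0 ≤ μ / p := div_nonneg hμ.le (by linarith)
  set C := a • F + b • G with hC
  have hmaj0 := OgdenAux.majorize F G a b ha hb 0
  have hmaj1 := OgdenAux.majorize F G a b ha hb 1
  have hmaj2 := OgdenAux.majorize F G a b ha hb 2
  rw [OgdenAux.ite_sum0, OgdenAux.ite_sum0, OgdenAux.ite_sum0] at hmaj0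
  rw [OgdenAux.ite_sum1, OgdenAux.ite_sum1, OgdenAux.ite_sum1] at hmaj1
  rw [OgdenAux.ite_sum2, OgdenAux.ite_sum2, OgdenAux.ite_sum2] at hmaj2
  set sC := singularValues C with hsC
  set sF := singularValues F with hsF
  set sG := singularValues G with hsG
  set y0 := a * sF 0 + b * sG 0 with hy0
  set y1 := a * sF 1 + b * sG 1 with hy1
  set y2 := a * sF 2 + b * sG 2 with hy2
  have hCanti := OgdenAux.sv_antitone C
  have hFanti := OgdenAux.sv_antitone F
  have hGanti := OgdenAux.sv_antitone G
  have hstep1 : sC 0 ^ p + sC 1 ^ p + sC 2 ^ p ≤ y0 ^ p + y1 ^ p + y2 ^ p := by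
    refine OgdenAux.hlp hp (OgdenAux.sv_nonneg C 2)
      (hCanti (by decide : (1:Fin 3) ≤ 2)) (hCanti (by decide : (0:Fin 3) ≤ 1))
      ?_ ?_ ?_ (by linarith) (by linarith) (by linarith)
    · exact add_nonneg (mul_nonneg ha (OgdenAux.sv_nonneg F 2))
        (mul_nonneg hb (OgdenAux.sv_nonneg G 2))
    · have h1 := hFanti (by decide : (1:Fin 3) ≤ 2)
      have h2 := hGanti (by decide : (1:Fin 3) ≤ 2)
      have := mul_le_mul_of_nonneg_left h1 ha
      have := mul_le_mul_of_nonneg_left h2 hb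
      simp only [hy1, hy2]; linarith
    · have h1 := hFanti (by decide : (0:Fin 3) ≤ 1)
      have h2 := hGanti (by decide : (0:Fin 3) ≤ 1)
      have := mul_le_mul_of_nonneg_left h1 ha
      have := mul_le_mul_of_nonneg_left h2 hb
      simp only [hy0, hy1]; linarith
  have hconv : ∀ u v : ℝ, 0 ≤ u → 0 ≤ v → (a * u + b * v) ^ p ≤ a * u ^ p + b * v ^ p := by
    intro u v hu hv
    have := (convexOn_rpow hp).2 (Set.mem_Ici.2 hu) (Set.mem_Ici.2 hv) ha hb hab
    simpa [smul_eq_mul] using this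
  have hstep2 : y0 ^ p + y1 ^ p + y2 ^ p
      ≤ a * (sF 0 ^ p + sF 1 ^ p + sF 2 ^ p) + b * (sG 0 ^ p + sG 1 ^ p + sG 2 ^ p) := by
    have h0 := hconv (sF 0) (sG 0) (OgdenAux.sv_nonneg F 0) (OgdenAux.sv_nonneg G 0)
    have h1 := hconv (sF 1) (sG 1) (OgdenAux.sv_nonneg F 1) (OgdenAux.sv_nonneg G 1)
    have h2 := hconv (sF 2) (sG 2) (OgdenAux.sv_nonneg F 2) (OgdenAux.sv_nonneg G 2)
    simp only [hy0, hy1, hy2]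
    linarith
  rw [Fin.sum_univ_three, Fin.sum_univ_three, Fin.sum_univ_three]
  calc μ / p * (sC 0 ^ p + sC 1 ^ p + sC 2 ^ p)
      ≤ μ / p * (a * (sF 0 ^ p + sF 1 ^ p + sF 2 ^ p)
          + b * (sG 0 ^ p + sG 1 ^ p + sG 2 ^ p)) := by
        apply mul_le_mul_of_nonneg_left _ hμp
        linarith
    _ = a * (μ / p * (sF 0 ^ p + sF 1 ^ p + sF 2 ^ p))
        + b * (μ / p * (sG 0 ^ p + sG 1 ^ p + sG 2 ^ p)) := by ring
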